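/- arXiv:2510.01510 — 3 statements merged into one kernel-verified Lean document; each statement's English description precedes it below -/
import Mathlib

section
/- Graph reconstruction from covering walks: if a walk η̄ over a knowledge graph G visits every edge of G, then the knowledge graph H reconstructed from the anonymized recording of η̄ (with vertices given by first-occurrence indices of nodes, relations by first-occurrence indices of relation types, and edges by consecutive anonymized steps with direction flags) is isomorphic to G via the anonymization maps, and the anonymized query matches the original query under this isomorphism. -/
variable {V R : Type*}

/-- First-occurrence index of a vertex along a walk of length `l` with vertices `v`. -/
noncomputable def idV (l : ℕ) (v : ℕ → V) (x : V) : ℕ := sInf {s | s ≤ l ∧ v s = x}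

/-- First-occurrence index of a relation type along the walk (identifying `r` with
`r⁻¹`, i.e. looking only at the base relation of each step). -/
noncomputable def idR (l : ℕ) (r : ℕ → R × Bool) (ρ : R) : ℕ := sInf {s | s < l ∧ (r s).1 = ρ}

/-- The anonymized triple recorded at step `i`, oriented by the direction bit. -/
noncomputable def stepTriple (l : ℕ) (v : ℕ → V) (r : ℕ → R × Bool) (i : ℕ) : ℕ × ℕ × ℕ :=
  if (r i).2 then (idV l v (v i), idR l r (r i).1, idV l v (v (i + 1)))
  else (idV l v (v (i + 1)), idR l r (r i).1, idV l v (v i))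

/-- The edge set of the knowledge graph reconstructed from the anonymized recording. -/
def EH (l : ℕ) (v : ℕ → V) (r : ℕ → R × Bool) : Set (ℕ × ℕ × ℕ) :=
  {x | ∃ i < l, x = stepTriple l v r i}

/-- Graph reconstruction from covering walks.  If a walk `η̄` over `G`
(vertices `v`, steps `r`, validity `hwalk`) traverses every edge of `G` (`hcover`), then
the knowledge graph `H` reconstructed from the anonymized recording of `η̄` is isomorphic
to `G` via the anonymization maps `idV`, `idR`: these maps are injective (bijections onto
the reconstructed vertex/relation sets) and preserve edges, and consequently the
anonymized query `(idV h_q, idR r_q, ?)` matches the original query `(h_q, r_q, ?)` under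
this isomorphism.  (We assume every vertex is incident to some edge and every relation
type occurs, so that every vertex and relation of `G` appears on the covering walk.) -/
theorem stmt_10
    (E : Set (V × R × V)) (l : ℕ) (v : ℕ → V) (r : ℕ → R × Bool)
    (hq : V) (rq : R)
    (hwalk : ∀ i < l,
      if (r i).2 then (v i, (r i).1, v (i + 1)) ∈ E else (v (i + 1), (r i).1, v i) ∈ E)
    (hcover : ∀ e ∈ E, ∃ i < l,
      e = if (r i).2 then (v i, (r i).1, v (i + 1)) else (v (i + 1), (r i).1, v i))
    (hvtx : ∀ x : V, ∃ ρ y, (x, ρ, y) ∈ E ∨ (y, ρ, x) ∈ E)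
    (hrel : ∀ ρ : R, ∃ x y, (x, ρ, y) ∈ E) :
    Function.Injective (idV l v) ∧ Function.Injective (idR l r) ∧
      (∀ (h : V) (ρ : R) (t : V),
        (h, ρ, t) ∈ E ↔ (idV l v h, idR l r ρ, idV l v t) ∈ EH l v r) ∧
      (idV l v hq, idR l r rq) = (idV l v hq, idR l r rq) := by

  have hVex : ∀ x : V, ∃ s, s ≤ l ∧ v s = x := by
    intro x
    obtain ⟨ρ, y, h | h⟩ := hvtx x <;>
    · obtain ⟨i, hi, he⟩ := hcover _ h
      split at he <;>
      · simp only [Prod.mk.injEq] at he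
        first
        | exact ⟨i, hi.le, he.1.symm⟩
        | exact ⟨i + 1, hi, he.2.2.symm⟩
        | exact ⟨i, hi.le, he.2.2.symm⟩
        | exact ⟨i + 1, hi, he.1.symm⟩
  have hVspec : ∀ x : V, v (idV l v x) = x := by
    intro x
    obtain ⟨s, hs⟩ := hVex x
    exact (Nat.sInf_mem (⟨s, hs⟩ : {s | s ≤ l ∧ v s = x}.Nonempty)).2
  have injV : Function.Injective (idV l v) := by
    intro a b hab
    rw [← hVspec a, ← hVspec b, hab]
  have hRex : ∀ ρ : R, ∃ s, s < l ∧ (r s).1 = ρ := by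
    intro ρ
    obtain ⟨x, y, h⟩ := hrel ρ
    obtain ⟨i, hi, he⟩ := hcover _ h
    split at he <;>
    · simp only [Prod.mk.injEq] at he
      exact ⟨i, hi, he.2.1.symm⟩
  have hRspec : ∀ ρ : R, (r (idR l r ρ)).1 = ρ := by
    intro ρ
    obtain ⟨s, hs⟩ := hRex ρ
    exact (Nat.sInf_mem (⟨s, hs⟩ : {s | s < l ∧ (r s).1 = ρ}.Nonempty)).2
  have injR : Function.Injective (idR l r) := by
    intro a b hab
    rw [← hRspec a, ← hRspec b, hab]
  refine ⟨injV, injR, ?_, rfl⟩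
  intro h ρ t
  constructor
  · intro hE
    obtain ⟨i, hi, he⟩ := hcover _ hE
    refine ⟨i, hi, ?_⟩
    unfold stepTriple
    by_cases hb : (r i).2 <;> simp only [hb, if_true, if_false, Bool.false_eq_true,
        Prod.mk.injEq] at he ⊢ <;>
      simp [he.1, he.2.1, he.2.2]
  · rintro ⟨i, hi, he⟩
    have hw := hwalk i hi
    unfold stepTriple at he
    by_cases hb : (r i).2 <;>
      simp only [hb, if_true, if_false, Bool.false_eq_true, Prod.mk.injEq] at he hw <;>
    · obtain ⟨h1, h2, h3⟩ := he
      rw [injV h1, injR h2, injV h3]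
      exact hw
end

section
/- Consider a flower-shaped knowledge graph consisting of a central node s, a directed stem s →^{r_0} b_1 →^{r_0} ... →^{r_0} b_t, and c ≥ 2 petals, where petal i consists of a directed 4-cycle-like gadget attached to s via two edges of types r_1^{(i)} and r_2^{(i)}, with the rest of petal i colored by r_1^{(i)}, and where the relation types are assigned cyclically so that r_2^{(i)} = r_1^{(i+1 mod c)}. Then the map swapping relation types according to the cyclic shift, together with the induced node permutation rotating the petals, is a non-trivial automorphism of the knowledge graph fixing s, r_0, and the stem pointwise. -/
/-!
Rotating the petals by any permutation `ρ` of the petal indices, and relabelling each petal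
relation `r₁^{(i)}` as `r₁^{(ρ i)}`, maps every stem and internal petal edge to an edge of the
same kind. The only edges that couple two petals are the attachments `(s, r₁^{(i+1)}, a₂^{(i)})`,
and these are preserved as soon as `ρ` commutes with the cyclic shift `i ↦ i + 1`, as the
shift itself does. The shift moves every petal once there are at least two of them.
-/

namespace Petals

/-- Vertices of the flower-shaped knowledge graph: the stem `b_0, …, b_t`
(`b_0 = s` is the central node), and for each of the `c` petals, the nodes
`a_1, …, a_{2(l+1)+1}` (the petal length parameter being `l + 1 ≥ 1`). -/
abbrev PV (c t l : ℕ) := Fin (t + 1) ⊕ (Fin c × Fin (2 * l + 3))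

/-- Relation types: `none` is `r₀` (the stem/query relation); `some i` is `r₁^{(i)}`,
and the cyclic assignment sets `r₂^{(i)} = r₁^{(i+1 mod c)} = some (finRotate c i)`. -/
abbrev PR (c : ℕ) := Option (Fin c)

/-- The edges of the flower-shaped knowledge graph with `c` petals of length `l + 1` and
a stem of length `t`: consecutive stem edges of type `r₀`; for each petal `i`, the two
attachment edges `(s, r₁^{(i)}, a₁^{(i)})` and `(s, r₂^{(i)}, a₂^{(i)})`, the internal
edges `(a_p^{(i)}, r₁^{(i)}, a_{p+2}^{(i)})`, and the closing edge into the last node. -/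
def petalsE (c t l : ℕ) : Set (PV c t l × PR c × PV c t l) :=
  {x | ∃ j : Fin t, x = (Sum.inl j.castSucc, none, Sum.inl j.succ)} ∪
  {x | ∃ i : Fin c, x = (Sum.inl 0, some i, Sum.inr (i, ⟨0, by omega⟩))} ∪
  {x | ∃ i : Fin c, x = (Sum.inl 0, some (finRotate c i), Sum.inr (i, ⟨1, by omega⟩))} ∪
  {x | ∃ (i : Fin c) (p : ℕ) (hp : p + 2 ≤ 2 * l + 2),
      x = (Sum.inr (i, ⟨p, by omega⟩), some i, Sum.inr (i, ⟨p + 2, by omega⟩))} ∪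
  {x | ∃ i : Fin c,
      x = (Sum.inr (i, ⟨2 * l + 1, by omega⟩), some i, Sum.inr (i, ⟨2 * l + 2, by omega⟩))}

/-- The node permutation rotating the petals (and fixing the stem pointwise). -/
def πrot (c t l : ℕ) : PV c t l ≃ PV c t l :=
  Equiv.sumCongr (Equiv.refl _) (Equiv.prodCongr (finRotate c) (Equiv.refl _))

/-- The relation permutation cyclically shifting the petal relation types
(and fixing `r₀`). -/
def φrot (c : ℕ) : PR c ≃ PR c := Equiv.optionCongr (finRotate c)

variable {c t l : ℕ}

def petalPerm (ρ : Equiv.Perm (Fin c)) : PV c t l ≃ PV c t l :=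
  Equiv.sumCongr (Equiv.refl _) (Equiv.prodCongr ρ (Equiv.refl _))

@[simp]
lemma petalPerm_inl (ρ : Equiv.Perm (Fin c)) (j : Fin (t + 1)) :
    petalPerm (l := l) ρ (Sum.inl j) = Sum.inl j := rfl

@[simp]
lemma petalPerm_inr (ρ : Equiv.Perm (Fin c)) (i : Fin c) (p : Fin (2 * l + 3)) :
    petalPerm (t := t) ρ (Sum.inr (i, p)) = Sum.inr (ρ i, p) := rfl

@[simp]
lemma petalPerm_inv_apply_apply (ρ : Equiv.Perm (Fin c)) (x : PV c t l) :
    petalPerm ρ⁻¹ (petalPerm ρ x) = x := by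
  rcases x with j | ⟨i, p⟩ <;> simp

lemma map_mem_petalsE {ρ : Equiv.Perm (Fin c)} (hρ : Commute ρ (finRotate c))
    {h t' : PV c t l} {r : PR c} (hm : (h, r, t') ∈ petalsE c t l) :
    (petalPerm ρ h, r.map ρ, petalPerm ρ t') ∈ petalsE c t l := by
  simp only [petalsE, Set.mem_union, Set.mem_ofPred_eq, Prod.mk.injEq] at hm ⊢
  rcases hm with ((((⟨j, rfl, rfl, rfl⟩ | ⟨i, rfl, rfl, rfl⟩) | ⟨i, rfl, rfl, rfl⟩) |
    ⟨i, p, hp, rfl, rfl, rfl⟩) | ⟨i, rfl, rfl, rfl⟩)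
  · exact Or.inl (Or.inl (Or.inl (Or.inl ⟨j, by simp⟩)))
  · exact Or.inl (Or.inl (Or.inl (Or.inr ⟨ρ i, by simp⟩)))
  · exact Or.inl (Or.inl (Or.inr ⟨ρ i, by simpa using Equiv.Perm.ext_iff.mp hρ.eq i⟩))
  · exact Or.inl (Or.inr ⟨ρ i, p, hp, by simp⟩)
  · exact Or.inr ⟨ρ i, by simp⟩

lemma map_mem_petalsE_iff {ρ : Equiv.Perm (Fin c)} (hρ : Commute ρ (finRotate c))
    {h t' : PV c t l} {r : PR c} :
    (petalPerm ρ h, r.map ρ, petalPerm ρ t') ∈ petalsE c t l ↔ (h, r, t') ∈ petalsE c t l := by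
  refine ⟨fun hm => ?_, map_mem_petalsE hρ⟩
  simpa [Option.map_map] using map_mem_petalsE hρ.inv_left hm

lemma finRotate_apply_ne (hc : 2 ≤ c) (i : Fin c) : finRotate c i ≠ i :=
  Equiv.Perm.mem_support.mp (support_finRotate_of_le hc ▸ Finset.mem_univ i)

/-- In the flower-shaped knowledge graph with cyclically assigned petal
relation types (`r₂^{(i)} = r₁^{(i+1 mod c)}`), the map swapping relation types according
to the cyclic shift, together with the induced node permutation rotating the petals, is a
non-trivial automorphism of the knowledge graph fixing the central node `s`, the relation
`r₀`, and the stem pointwise. -/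
theorem stmt_16 (c t l : ℕ) (hc : 2 ≤ c) :
    (∀ (h : PV c t l) (r : PR c) (t' : PV c t l),
        (h, r, t') ∈ petalsE c t l ↔ (πrot c t l h, φrot c r, πrot c t l t') ∈ petalsE c t l)
      ∧ (∃ x : PV c t l, πrot c t l x ≠ x)
      ∧ (∀ j : Fin (t + 1), πrot c t l (Sum.inl j) = Sum.inl j)
      ∧ φrot c none = none := by
  refine ⟨fun h r t' => (map_mem_petalsE_iff (Commute.refl _)).symm, ?_, fun _ => rfl, rfl⟩
  let i₀ : Fin c := ⟨0, by omega⟩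
  refine ⟨Sum.inr (i₀, ⟨0, by omega⟩), fun hx => finRotate_apply_ne hc i₀ ?_⟩
  exact congrArg Prod.fst (Sum.inr.inj hx)

end Petals
end

section
/- Universal approximation via covering walks: let φ be a link-invariant function on K_{n,m} with values in [0,1]. Suppose a model, given graph G and query (h,r,?), samples one walk of length l by a process whose expected edge cover time on any G ∈ K_{n,m} is at most a constant C_{n,m}, and whenever the walk covers all edges of G, outputs exactly φ(G)((h,r,t)) for the queried target t (made possible by reconstructing G up to isomorphism from the covering walk and invoking link invariance of φ). Then for any δ > 0, choosing l > C_{n,m}/δ guarantees that for every G ∈ K_{n,m} and every link (h,r,t), the model output equals φ(G)((h,r,t)) with probability greater than 1 − δ. -/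
open MeasureTheory
open scoped ENNReal

/-- A knowledge graph in `K_{n,m}`: vertex set `Fin n`, relation types among `Fin m`,
and a set of `m` labeled edges. -/
structure KGraph (n m : ℕ) where
  edges : Finset (Fin n × Fin m × Fin n)
  card_eq : edges.card = m

/-- A function assigning to each `G ∈ K_{n,m}` a map on links is link invariant if it is
preserved by all isomorphisms. -/
def LinkInvariant {n m : ℕ} (f : KGraph n m → Fin n → Fin m → Fin n → ℝ) : Prop :=
  ∀ (G G' : KGraph n m) (π : Fin n ≃ Fin n) (φ : Fin m ≃ Fin m),
    (∀ h r t, (h, r, t) ∈ G.edges ↔ (π h, φ r, π t) ∈ G'.edges) →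
    ∀ h r t, f G h r t = f G' (π h) (φ r) (π t)

/-- Universal approximation via covering walks.  Let `f` be a link-invariant
function on `K_{n,m}` with values in `[0,1]`.  Suppose a model, given `G` and query
`(h, r, ?)`, samples a walk (trajectory space `Ω G h r`, law `μ G h r`) whose expected edge
cover time is at most a constant `C`, and whenever the walk of length `l` covers all edges
(`coverT ω ≤ l`), outputs exactly `f G h r t` for each target `t` (possible by
reconstructing `G` up to isomorphism from the covering walk and invoking link invariance).
Then for any `δ > 0`, choosing `l > C / δ` guarantees that for every `G ∈ K_{n,m}` and
every link `(h, r, t)`, the model output equals `f G h r t` with probability greater than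
`1 − δ`. -/
theorem stmt_19 {n m : ℕ}
    (f : KGraph n m → Fin n → Fin m → Fin n → ℝ)
    (hrange : ∀ G h r t, f G h r t ∈ Set.Icc (0 : ℝ) 1)
    (hinv : LinkInvariant f)
    (Ω : KGraph n m → Fin n → Fin m → Type*)
    [∀ G h r, MeasurableSpace (Ω G h r)]
    (μ : ∀ G h r, Measure (Ω G h r)) [∀ G h r, IsProbabilityMeasure (μ G h r)]
    (coverT : ∀ G h r, Ω G h r → ℝ≥0∞)
    (hmeas : ∀ G h r, Measurable (coverT G h r))
    (C : ℝ) (hC : 0 ≤ C)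
    (hcov : ∀ G h r, ∫⁻ ω, coverT G h r ω ∂(μ G h r) ≤ ENNReal.ofReal C)
    (out : ∀ G h r, ℕ → Ω G h r → Fin n → ℝ)
    (hcorrect : ∀ G h r (l : ℕ) (ω : Ω G h r),
      coverT G h r ω ≤ (l : ℝ≥0∞) → ∀ t, out G h r l ω t = f G h r t)
    (δ : ℝ) (hδ : 0 < δ) (l : ℕ) (hl : C / δ < l)
    (G : KGraph n m) (h : Fin n) (r : Fin m) (t : Fin n) :
    1 - δ < (μ G h r {ω | out G h r l ω t = f G h r t}).toReal := by

  set ν := μ G h r with hν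
  set T := coverT G h r with hT
  have hlpos : 0 < (l : ℝ) := lt_of_le_of_lt (div_nonneg hC hδ.le) hl
  have hlne : (l : ℝ≥0∞) ≠ 0 := by
    simpa using Nat.pos_of_ne_zero (by exact_mod_cast hlpos.ne') |>.ne'
  have hlne' : (l : ℝ≥0∞) ≠ ⊤ := ENNReal.natCast_ne_top l
  have hA : MeasurableSet {ω | T ω ≤ (l : ℝ≥0∞)} :=
    measurableSet_le (hmeas G h r) measurable_const
  -- Markov's inequality
  have markov : ν {ω | (l : ℝ≥0∞) ≤ T ω} ≤ ENNReal.ofReal C / l := by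
    calc ν {ω | (l : ℝ≥0∞) ≤ T ω} ≤ (∫⁻ ω, T ω ∂ν) / l :=
          MeasureTheory.meas_ge_le_lintegral_div (hmeas G h r).aemeasurable hlne hlne'
      _ ≤ ENNReal.ofReal C / l := by
          exact ENNReal.div_le_div_right (hcov G h r) _
  have hcompl : ν {ω | T ω ≤ (l : ℝ≥0∞)}ᶜ ≤ ENNReal.ofReal C / l := by
    refine le_trans (measure_mono ?_) markov
    intro ω hω
    simp only [Set.mem_compl_iff, Set.mem_setOf_eq, not_le] at hω
    exact le_of_lt hω
  have hfin : ENNReal.ofReal C / l ≠ ⊤ :=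
    (ENNReal.div_lt_top ENNReal.ofReal_ne_top hlne).ne
  have hcompl' : (ν {ω | T ω ≤ (l : ℝ≥0∞)}ᶜ).toReal ≤ C / l := by
    have := ENNReal.toReal_mono hfin hcompl
    rwa [ENNReal.toReal_div, ENNReal.toReal_ofReal hC, ENNReal.toReal_natCast] at this
  have hCl : C / l < δ := by
    rw [div_lt_iff₀ hlpos]
    have := (div_lt_iff₀ hδ).mp hl
    linarith [mul_comm δ (l:ℝ)]
  have hsub : {ω | T ω ≤ (l : ℝ≥0∞)} ⊆ {ω | out G h r l ω t = f G h r t} := by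
    intro ω hω
    exact hcorrect G h r l ω hω t
  have hAval : 1 - δ < (ν {ω | T ω ≤ (l : ℝ≥0∞)}).toReal := by
    have hsum : ν {ω | T ω ≤ (l : ℝ≥0∞)} + ν {ω | T ω ≤ (l : ℝ≥0∞)}ᶜ = 1 :=
      by rw [measure_add_measure_compl hA, measure_univ]
    have h1 : (ν {ω | T ω ≤ (l : ℝ≥0∞)}).toReal
        + (ν {ω | T ω ≤ (l : ℝ≥0∞)}ᶜ).toReal = 1 := by
      rw [← ENNReal.toReal_add (measure_ne_top _ _) (measure_ne_top _ _), hsum,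
        ENNReal.toReal_one]
    linarith
  refine lt_of_lt_of_le hAval (ENNReal.toReal_mono (measure_ne_top _ _) ?_)
  exact measure_mono hsub
end
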